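/- Let (Š_n) be the shaved walk associated with the animal walk (S_n). For any integers x_0, x_1, …, x_n with x_0 = 0, x_{i+1} − x_i ∈ ℤ_{<0} ∪ {1} for all i < n, and x_{i+1} ≥ (min_{j≤i} x_j) − 1 for all i < n, one has P(Š_0 = x_0, Š_1 = x_1, …, Š_n = x_n) = 2^{x_n − min_{i≤n} x_i} / 3^n. -/

import Mathlib

/-!
Shaving does not change the height `S n - min_{i ≤ n} S i` of the walk above its running
minimum. Hence, once `Š 0, …, Š n` equal `x 0, …, x n`, the event `Š (n + 1) = x (n + 1)` is an
event about the increment `ξ n` alone: `ξ n = x (n + 1) - x n` if `x (n + 1)` does not go below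
the running minimum `m` of `x`, and `ξ n < m - x n` if `x (n + 1) = m - 1`. By independence and
the geometric tail `P (ξ < c) = 2 ^ c / 3` for `c ≤ 0`, each step multiplies the probability by
`2 ^ (h (n + 1) - h n) / 3`, where `h k = x k - min_{i ≤ k} x i`, and the product telescopes.
-/

open MeasureTheory

/-- The animal walk: S 0 = 0 and S n = ξ 0 + … + ξ (n-1). -/
def walk {Ω : Type*} (ξ : ℕ → Ω → ℤ) (n : ℕ) (ω : Ω) : ℤ :=
  ∑ i ∈ Finset.range n, ξ i ω

/-- The step distribution μ of the animal walk, evaluated on the singleton {z}: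
μ({1}) = 2/3, μ({−k}) = 2^{−k}/3 for k ≥ 1, and 0 otherwise. -/
noncomputable def animalStepLaw (z : ℤ) : ENNReal :=
  if z = 1 then 2/3 else if z < 0 then (2 : ENNReal) ^ z / 3 else 0

/-- Auxiliary: the pair (Š n, min_{i≤n} Š i) of the shaved walk associated with a
path S, defined by Š 0 = 0 and
Š_{n+1} = Š_n + (S_{n+1} − S_n) if S_{n+1} ≥ min_{i≤n} S_i, and
Š_{n+1} = (min_{i≤n} Š_i) − 1 if S_{n+1} < min_{i≤n} S_i. -/
def shavedAux (S : ℕ → ℤ) : ℕ → ℤ × ℤ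
  | 0 => (0, 0)
  | n+1 =>
    let p := shavedAux S n
    let v := if (Finset.range (n+1)).inf' Finset.nonempty_range_add_one S ≤ S (n+1)
             then p.1 + (S (n+1) - S n)
             else p.2 - 1
    (v, min p.2 v)

/-- The shaved walk Š associated with a path S. -/
def shaved (S : ℕ → ℤ) (n : ℕ) : ℤ := (shavedAux S n).1

section RunningMin

variable {α : Type*} [LinearOrder α]

def runningMin (f : ℕ → α) (n : ℕ) : α :=
  (Finset.range (n + 1)).inf' Finset.nonempty_range_add_one f

@[simp]
lemma runningMin_zero (f : ℕ → α) : runningMin f 0 = f 0 := by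
  simp [runningMin]

lemma runningMin_succ (f : ℕ → α) (n : ℕ) :
    runningMin f (n + 1) = min (runningMin f n) (f (n + 1)) := by
  have h := Finset.inf'_insert (Finset.nonempty_range_add_one (n := n)) f (b := n + 1)
  simp only [← Finset.range_add_one] at h
  rw [runningMin, runningMin, h, min_comm]

lemma runningMin_le (f : ℕ → α) (n : ℕ) : runningMin f n ≤ f n :=
  Finset.inf'_le f (Finset.self_mem_range_succ n)

lemma runningMin_congr {f g : ℕ → α} {n : ℕ} (h : ∀ i ≤ n, f i = g i) :
    runningMin f n = runningMin g n :=
  Finset.inf'_congr _ rfl fun i hi => h i (Nat.lt_succ_iff.1 (Finset.mem_range.1 hi))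

end RunningMin

section Shaved

variable (S : ℕ → ℤ)

lemma shavedAux_snd (n : ℕ) : (shavedAux S n).2 = runningMin (shaved S) n := by
  induction n with
  | zero => rfl
  | succ n ih => rw [runningMin_succ, ← ih]; rfl

lemma shaved_succ (n : ℕ) :
    shaved S (n + 1) =
      if runningMin S n ≤ S (n + 1) then shaved S n + (S (n + 1) - S n)
      else runningMin (shaved S) n - 1 := by
  rw [← shavedAux_snd]; rfl

lemma shaved_sub_runningMin (n : ℕ) :
    shaved S n - runningMin (shaved S) n = S n - runningMin S n := by
  induction n with
  | zero => simp
  | succ n ih =>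
    have hmin := runningMin_le (shaved S) n
    rw [runningMin_succ, runningMin_succ, shaved_succ]
    split_ifs <;> omega

lemma shaved_congr {S' : ℕ → ℤ} {n : ℕ} (h : ∀ i ≤ n, S i = S' i) :
    ∀ i ≤ n, shaved S i = shaved S' i := by
  induction n with
  | zero => intro i hi; rw [Nat.le_zero.1 hi]; rfl
  | succ n ih =>
    have ih := ih fun i hi => h i (by omega)
    intro i hi
    rcases Nat.lt_or_eq_of_le hi with hi | rfl
    · exact ih i (by omega)
    rw [shaved_succ, shaved_succ, runningMin_congr (fun i hi => h i (by omega)),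
      runningMin_congr ih, h n (by omega), h (n + 1) le_rfl, ih n le_rfl]

lemma shaved_succ_of_eqOn {x : ℕ → ℤ} {n : ℕ} (hx : ∀ i ≤ n, shaved S i = x i) :
    shaved S (n + 1) =
      if runningMin x n - x n ≤ S (n + 1) - S n then x n + (S (n + 1) - S n)
      else runningMin x n - 1 := by
  have hmin : runningMin (shaved S) n = runningMin x n := runningMin_congr hx
  have hheight := shaved_sub_runningMin S n
  rw [hx n le_rfl, hmin] at hheight
  rw [shaved_succ, hmin, hx n le_rfl]
  split_ifs <;> omega

/-- The increments of `S` that make the shaved walk step from `x n` to `x (n + 1)`. -/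
def shavedIncrementSet (x : ℕ → ℤ) (n : ℕ) : Set ℤ :=
  if runningMin x n ≤ x (n + 1) then {x (n + 1) - x n} else Set.Iio (runningMin x n - x n)

lemma shaved_eqOn_succ_iff {x : ℕ → ℤ} {n : ℕ} (hx : runningMin x n - 1 ≤ x (n + 1)) :
    (∀ i ≤ n + 1, shaved S i = x i) ↔
      (∀ i ≤ n, shaved S i = x i) ∧ S (n + 1) - S n ∈ shavedIncrementSet x n := by
  refine ⟨fun h => ⟨fun i hi => h i (by omega), ?_⟩, fun ⟨h, hinc⟩ i hi => ?_⟩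
  · have hnext := h (n + 1) le_rfl
    rw [shaved_succ_of_eqOn S fun i hi => h i (by omega)] at hnext
    unfold shavedIncrementSet
    split_ifs at hnext ⊢ <;> simp only [Set.mem_singleton_iff, Set.mem_Iio] <;> omega
  · rcases Nat.lt_or_eq_of_le hi with hi | rfl
    · exact h i (by omega)
    rw [shaved_succ_of_eqOn S h]
    unfold shavedIncrementSet at hinc
    split_ifs at hinc ⊢ <;> simp only [Set.mem_singleton_iff, Set.mem_Iio] at hinc <;> omega

end Shaved

lemma walk_succ_sub {Ω : Type*} (ξ : ℕ → Ω → ℤ) (n : ℕ) (ω : Ω) :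
    walk ξ (n + 1) ω - walk ξ n ω = ξ n ω := by
  rw [walk, walk, Finset.sum_range_succ, add_sub_cancel_left]

lemma walk_congr {Ω : Type*} {ξ : ℕ → Ω → ℤ} {m : ℕ} {ω ω' : Ω}
    (h : ∀ i < m, ξ i ω = ξ i ω') : walk ξ m ω = walk ξ m ω' :=
  Finset.sum_congr rfl fun i hi => h i (Finset.mem_range.1 hi)

lemma animalStepLaw_of_neg_or_eq_one {d : ℤ} (hd : d < 0 ∨ d = 1) :
    animalStepLaw d = 2 ^ d / 3 := by
  rcases hd with hd | rfl
  · rw [animalStepLaw, if_neg (by omega), if_pos hd]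
  · simp [animalStepLaw]

lemma measure_lt_of_animalStepLaw {Ω : Type*} [MeasurableSpace Ω] {P : Measure Ω} {X : Ω → ℤ}
    (hX : Measurable X) (hlaw : ∀ z, P {ω | X ω = z} = animalStepLaw z) {c : ℤ} (hc : c ≤ 0) :
    P {ω | X ω < c} = 2 ^ c / 3 := by
  have hunion : {ω | X ω < c} = ⋃ k : ℕ, {ω | X ω = c - 1 - k} := by
    ext ω
    simp only [Set.mem_ofPred_eq, Set.mem_iUnion]
    exact ⟨fun h => ⟨(c - 1 - X ω).toNat, by omega⟩, fun ⟨k, hk⟩ => by omega⟩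
  have hdisj : Pairwise (Function.onFun Disjoint fun k : ℕ => {ω | X ω = c - 1 - k}) :=
    fun k l hkl => Set.disjoint_left.2 fun ω (hk : _ = _) (hl : _ = _) => hkl (by omega)
  have hterm (k : ℕ) : P {ω | X ω = c - 1 - k} = 2 ^ c / 3 * 2⁻¹ * 2⁻¹ ^ k := by
    rw [hlaw, animalStepLaw_of_neg_or_eq_one (Or.inl (by omega)),
      show c - 1 - (k : ℤ) = c + -((k + 1 : ℕ) : ℤ) by push_cast; ring,
      ENNReal.zpow_add (by norm_num) (by norm_num), ENNReal.zpow_neg, zpow_natCast,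
      ← ENNReal.inv_pow, pow_succ, ENNReal.mul_inv (by simp) (by simp), div_eq_mul_inv,
      div_eq_mul_inv]
    ring
  rw [hunion, measure_iUnion hdisj fun k => hX (measurableSet_singleton _), tsum_congr hterm,
    ENNReal.tsum_mul_left, ENNReal.tsum_geometric, ENNReal.one_sub_inv_two, inv_inv, mul_assoc,
    ENNReal.inv_mul_cancel (by norm_num) (by norm_num), mul_one]

lemma ProbabilityTheory.iIndepFun.measure_inter_preimage_eq_mul_of_eqOn {Ω β : Type*}
    [MeasurableSpace Ω] [MeasurableSpace β] [Countable β] [MeasurableSingletonClass β]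
    {P : Measure Ω} {ξ : ℕ → Ω → β} (hindep : iIndepFun ξ P) (hmeas : ∀ i, Measurable (ξ i))
    {n : ℕ} {E : Set Ω} (hE : ∀ ω ω', (∀ i < n, ξ i ω = ξ i ω') → ω ∈ E → ω' ∈ E) (A : Set β) :
    P (E ∩ ξ n ⁻¹' A) = P E * P (ξ n ⁻¹' A) := by
  set past : Ω → Finset.range n → β := fun ω i => ξ i ω
  have hpast : E = past ⁻¹' (past '' E) := by
    refine Set.Subset.antisymm (Set.subset_preimage_image _ _) ?_
    rintro ω ⟨ω', hω', heq⟩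
    exact hE ω' ω (fun i hi => congrFun heq ⟨i, Finset.mem_range.2 hi⟩) hω'
  have hpresent : ξ n ⁻¹' A = (fun ω (i : ({n} : Finset ℕ)) => ξ i ω) ⁻¹'
      ((fun y => y ⟨n, Finset.mem_singleton_self n⟩) ⁻¹' A) := rfl
  rw [hpast, hpresent]
  exact (hindep.indepFun_finset _ _ (by simp) hmeas).measure_inter_preimage_eq_mul _ _
    (Set.to_countable _).measurableSet (Set.to_countable _).measurableSet

section PathEvent

variable {Ω : Type*} (ξ : ℕ → Ω → ℤ) (x : ℕ → ℤ)

def shavedPathEvent (n : ℕ) : Set Ω :=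
  {ω | ∀ i ≤ n, shaved (fun m => walk ξ m ω) i = x i}

lemma shavedPathEvent_succ {n : ℕ} (hx : runningMin x n - 1 ≤ x (n + 1)) :
    shavedPathEvent ξ x (n + 1) = shavedPathEvent ξ x n ∩ ξ n ⁻¹' shavedIncrementSet x n := by
  ext ω
  simp only [shavedPathEvent, Set.mem_ofPred_eq, Set.mem_inter_iff, Set.mem_preimage,
    shaved_eqOn_succ_iff _ hx, walk_succ_sub]

lemma mem_shavedPathEvent_of_eqOn {n : ℕ} {ω ω' : Ω} (h : ∀ i < n, ξ i ω = ξ i ω')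
    (hω : ω ∈ shavedPathEvent ξ x n) : ω' ∈ shavedPathEvent ξ x n := fun i hi => by
  rw [← shaved_congr _ (fun m hm => walk_congr fun j hj => h j (by omega)) i hi]
  exact hω i hi

end PathEvent

lemma measure_preimage_shavedIncrementSet {Ω : Type*} [MeasurableSpace Ω] {P : Measure Ω}
    {X : Ω → ℤ} (hX : Measurable X) (hlaw : ∀ z, P {ω | X ω = z} = animalStepLaw z)
    {x : ℕ → ℤ} {n : ℕ} (hstep : x (n + 1) - x n < 0 ∨ x (n + 1) - x n = 1)
    (hshave : runningMin x n - 1 ≤ x (n + 1)) :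
    P (X ⁻¹' shavedIncrementSet x n) =
      2 ^ ((x (n + 1) - runningMin x (n + 1)) - (x n - runningMin x n)) / 3 := by
  have hmin := runningMin_le x n
  rw [shavedIncrementSet, runningMin_succ]
  split_ifs with h
  · change P {ω | X ω = _} = _
    rw [min_eq_left h, hlaw, animalStepLaw_of_neg_or_eq_one hstep]
    congr 2
    ring
  · change P {ω | X ω < _} = _
    rw [min_eq_right (by omega), measure_lt_of_animalStepLaw hX hlaw (by omega)]
    congr 2
    ring

lemma measure_shavedPathEvent_succ {Ω : Type*} [MeasurableSpace Ω] {P : Measure Ω}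
    {ξ : ℕ → Ω → ℤ} (hmeas : ∀ i, Measurable (ξ i)) (hindep : ProbabilityTheory.iIndepFun ξ P)
    (hlaw : ∀ i, ∀ z : ℤ, P {ω | ξ i ω = z} = animalStepLaw z) {x : ℕ → ℤ} {n : ℕ}
    (hstep : x (n + 1) - x n < 0 ∨ x (n + 1) - x n = 1)
    (hshave : runningMin x n - 1 ≤ x (n + 1)) :
    P (shavedPathEvent ξ x (n + 1)) = P (shavedPathEvent ξ x n) *
      (2 ^ ((x (n + 1) - runningMin x (n + 1)) - (x n - runningMin x n)) / 3) := by
  rw [shavedPathEvent_succ ξ x hshave,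
    hindep.measure_inter_preimage_eq_mul_of_eqOn hmeas
      (fun _ _ h => mem_shavedPathEvent_of_eqOn ξ x h),
    measure_preimage_shavedIncrementSet (hmeas n) (hlaw n) hstep hshave]

lemma ENNReal.zpow_div_pow_mul_zpow_sub_div {a b : ENNReal} (ha₀ : a ≠ 0) (ha : a ≠ ⊤)
    (hb : b ≠ 0) (k l : ℤ) (n : ℕ) :
    a ^ k / b ^ n * (a ^ (l - k) / b) = a ^ l / b ^ (n + 1) := by
  have hsplit : a ^ l = a ^ k * a ^ (l - k) := by rw [← ENNReal.zpow_add ha₀ ha, add_sub_cancel]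
  rw [hsplit, div_eq_mul_inv, div_eq_mul_inv, div_eq_mul_inv, pow_succ,
    ENNReal.mul_inv (Or.inl (pow_ne_zero n hb)) (Or.inr hb)]
  ring

theorem shaved_walk_path_probability
    {Ω : Type*} [MeasurableSpace Ω] (P : Measure Ω) [IsProbabilityMeasure P]
    (ξ : ℕ → Ω → ℤ) (hmeas : ∀ i, Measurable (ξ i))
    (hindep : ProbabilityTheory.iIndepFun ξ P)
    (hlaw : ∀ i, ∀ z : ℤ, P {ω | ξ i ω = z} = animalStepLaw z)
    (n : ℕ) (x : ℕ → ℤ) (h0 : x 0 = 0)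
    (hstep : ∀ i < n, x (i+1) - x i < 0 ∨ x (i+1) - x i = 1)
    (hshave : ∀ i < n,
      (Finset.range (i+1)).inf' Finset.nonempty_range_add_one x - 1 ≤ x (i+1)) :
    P {ω | ∀ i ≤ n, shaved (fun m => walk ξ m ω) i = x i} =
      (2 : ENNReal) ^ (x n - (Finset.range (n+1)).inf' Finset.nonempty_range_add_one x)
        / 3 ^ n := by
  change P (shavedPathEvent ξ x n) = 2 ^ (x n - runningMin x n) / 3 ^ n
  induction n with
  | zero =>
    have huniv : shavedPathEvent ξ x 0 = Set.univ :=
      Set.eq_univ_of_forall fun ω i hi => by rw [Nat.le_zero.1 hi, h0]; rfl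
    simp [huniv]
  | succ n ih =>
    rw [measure_shavedPathEvent_succ hmeas hindep hlaw (hstep n n.lt_succ_self)
        (hshave n n.lt_succ_self),
      ih (fun i hi => hstep i (by omega)) (fun i hi => hshave i (by omega)),
      ENNReal.zpow_div_pow_mul_zpow_sub_div (by norm_num) (by norm_num) (by norm_num)]
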